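/- For a finite directed multigraph G, the set Path_G(∞) of infinite paths in G is countable if and only if G has no intersecting cycles. -/

import Mathlib

open Filter Topology

variable {V E : Type*}

/-- A nonempty list of edges forms a directed path:
the target of each edge is the source of the next. -/
def IsDiPath (src tgt : E → V) (l : List E) : Prop :=
  l ≠ [] ∧ l.Chain' (fun e f => tgt e = src f)

/-- The path `l` starts at the vertex `v` (the source of its first edge is `v`). -/
def StartsAt (src : E → V) (l : List E) (v : V) : Prop :=
  l.head?.map src = some v

/-- The path `l` ends at the vertex `w` (the target of its last edge is `w`). -/
def EndsAt (tgt : E → V) (l : List E) (w : V) : Prop :=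
  l.getLast?.map tgt = some w

/-- `l` is a closed path: a path such that the target of the last edge
equals the source of the first edge. -/
def IsClosedDiPath (src tgt : E → V) (l : List E) : Prop :=
  IsDiPath src tgt l ∧ ∃ v : V, StartsAt src l v ∧ EndsAt tgt l v

/-- `l` is a simple cycle: a closed path whose edge sources are pairwise distinct. -/
def IsSimpleCycle (src tgt : E → V) (l : List E) : Prop :=
  IsClosedDiPath src tgt l ∧ (l.map src).Nodup

/-- The vertex `v` lies on the cycle `l`, i.e. it is the source of one of its edges. -/
def OnCycle (src : E → V) (l : List E) (v : V) : Prop :=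
  v ∈ l.map src

/-- Two simple cycles are distinct if neither is a cyclic rotation of the other;
the graph has no intersecting cycles if any two distinct simple cycles are
vertex-disjoint. -/
def NoIntersectingCycles (src tgt : E → V) : Prop :=
  ∀ l l' : List E, IsSimpleCycle src tgt l → IsSimpleCycle src tgt l' →
    ¬ l.IsRotated l' → ∀ v : V, ¬ (OnCycle src l v ∧ OnCycle src l' v)

/-- `v ≥ w`: either `v = w` or there is a directed path from `v` to `w`. -/
def Reaches (src tgt : E → V) (v w : V) : Prop :=
  v = w ∨ ∃ l : List E, IsDiPath src tgt l ∧ StartsAt src l v ∧ EndsAt tgt l w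

/-- `v` and `w` are mutually reachable. -/
def MutReach (src tgt : E → V) (v w : V) : Prop :=
  Reaches src tgt v w ∧ Reaches src tgt w v

/-- The number of directed paths of length `n` in the graph starting at `v`. -/
noncomputable def pathCount (src tgt : E → V) (v : V) (n : ℕ) : ℕ :=
  Nat.card {l : List E // l.length = n ∧ IsDiPath src tgt l ∧ StartsAt src l v}

/-- An infinite path in the graph. -/
def IsInfPath (src tgt : E → V) (p : ℕ → E) : Prop :=
  ∀ n : ℕ, tgt (p n) = src (p (n + 1))

/-- The vertex `v` is visited infinitely often by the infinite path `p`. -/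
def VisitedInfOften (src : E → V) (p : ℕ → E) (v : V) : Prop :=
  ∀ N : ℕ, ∃ n ≥ N, src (p n) = v

/-- `v ≥ C`: the vertex `v` reaches some vertex on the cycle `C`. -/
def ReachesCycle (src tgt : E → V) (v : V) (l : List E) : Prop :=
  ∃ w : V, OnCycle src l w ∧ Reaches src tgt v w

/-- `C ≥ C'`: some vertex on the cycle `C` reaches the cycle `C'`. -/
def CycleReachesCycle (src tgt : E → V) (l l' : List E) : Prop :=
  ∃ v : V, OnCycle src l v ∧ ReachesCycle src tgt v l'

/-- Two cycles are vertex-disjoint. -/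
def CyclesDisjoint (src : E → V) (l l' : List E) : Prop :=
  ∀ v : V, ¬ (OnCycle src l v ∧ OnCycle src l' v)

/-- The vertex `v` lies on two distinct simple cycles. -/
def OnTwoCycles (src tgt : E → V) (v : V) : Prop :=
  ∃ l l' : List E, IsSimpleCycle src tgt l ∧ IsSimpleCycle src tgt l' ∧
    ¬ l.IsRotated l' ∧ OnCycle src l v ∧ OnCycle src l' v

/-- The adjacency matrix of the graph, as a real matrix: the `(a, b)` entry is the
number of edges from `a` to `b`. -/
noncomputable def adjMatrix (src tgt : E → V) : Matrix V V ℝ :=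
  Matrix.of fun a b => (Nat.card {e : E // src e = a ∧ tgt e = b} : ℝ)

/-!
If two distinct simple cycles `A` and `B` meet at `v`, rotate both to start at `v`: then
`A ++ B` and `B ++ A` are distinct closed walks at `v` of the same length, and choosing one of
them independently for every block embeds `Set ℕ` into the infinite paths.

Conversely, if distinct simple cycles are vertex-disjoint, then all closed walks at a vertex `u`
start with the same edge, since shortcutting a closed walk at its repeated vertices leaves a
simple cycle through `u` with the same first edge. An infinite path eventually uses only edges it
revisits, hence only edges lying on closed walks; from then on its next edge is a fixed function
of its current edge, and there are only countably many such sequences.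
-/

inductive IsWalk (src tgt : E → V) : V → List E → V → Prop
  | nil (u : V) : IsWalk src tgt u [] u
  | cons {u w : V} {e : E} {l : List E} :
      src e = u → IsWalk src tgt (tgt e) l w → IsWalk src tgt u (e :: l) w

section Walks

variable {src tgt : E → V} {u v w : V} {e : E} {l : List E}

@[simp]
theorem isWalk_nil_iff : IsWalk src tgt u [] w ↔ u = w :=
  ⟨fun h => by cases h; rfl, fun h => h ▸ .nil u⟩

@[simp]
theorem isWalk_cons_iff :
    IsWalk src tgt u (e :: l) w ↔ src e = u ∧ IsWalk src tgt (tgt e) l w :=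
  ⟨fun h => by cases h with | cons h₁ h₂ => exact ⟨h₁, h₂⟩, fun h => .cons h.1 h.2⟩

theorem isWalk_append {l₁ l₂ : List E} :
    IsWalk src tgt u (l₁ ++ l₂) w ↔
      ∃ x, IsWalk src tgt u l₁ x ∧ IsWalk src tgt x l₂ w := by
  induction l₁ generalizing u with
  | nil => simp
  | cons e l₁ ih => simp [ih, and_assoc]

theorem IsWalk.eq_of_isWalk {w' : V} (h : IsWalk src tgt u l w) (h' : IsWalk src tgt u l w') :
    w = w' := by
  induction h with
  | nil => exact isWalk_nil_iff.1 h'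
  | cons _ _ ih => exact ih (isWalk_cons_iff.1 h').2

theorem isWalk_iff_isDiPath (hl : l ≠ []) :
    IsWalk src tgt u l w ↔ IsDiPath src tgt l ∧ StartsAt src l u ∧ EndsAt tgt l w := by
  induction l generalizing u with
  | nil => exact absurd rfl hl
  | cons e l ih =>
    rcases l with _ | ⟨f, l⟩
    · simp [IsDiPath, StartsAt, EndsAt, List.Chain']
    · rw [isWalk_cons_iff, ih (List.cons_ne_nil f l)]
      simp [IsDiPath, StartsAt, EndsAt, List.Chain', List.isChain_cons_cons, eq_comm]
      tauto

theorem IsWalk.src_getElem_zero (h : IsWalk src tgt u l w) (hl : 0 < l.length) :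
    src l[0] = u := by
  cases h with
  | nil => simp at hl
  | cons he _ => exact he

theorem IsWalk.tgt_getElem (h : IsWalk src tgt u l w) {i : ℕ} (hi : i + 1 < l.length) :
    tgt l[i] = src l[i + 1] := by
  induction h generalizing i with
  | nil => simp at hi
  | cons _ h ih =>
    rcases i with _ | i
    · exact (h.src_getElem_zero _).symm
    · exact ih _

theorem IsWalk.tgt_getElem_of_succ_eq (h : IsWalk src tgt u l w) {i : ℕ}
    (hi : i + 1 = l.length) : tgt (l[i]'(by omega)) = w := by
  induction h generalizing i with
  | nil => simp at hi
  | cons _ h ih =>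
    rcases i with _ | i
    · cases h with
      | nil => rfl
      | cons => simp at hi
    · exact ih (by simpa using hi)

theorem IsWalk.exists_closed_infix_of_not_nodup (h : IsWalk src tgt u l w)
    (hl : ¬ (l.map src).Nodup) :
    ∃ a b c x, l = a ++ b ++ c ∧ b ≠ [] ∧ c ≠ [] ∧
      IsWalk src tgt u a x ∧ IsWalk src tgt x b x ∧ IsWalk src tgt x c w := by
  induction h with
  | nil => simp at hl
  | @cons u w e l he h ih =>
    rw [List.map_cons, List.nodup_cons, not_and_or, not_not] at hl
    rcases hl with hmem | hl
    · obtain ⟨f, hf, hfe⟩ := List.mem_map.1 hmem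
      obtain ⟨s, t, rfl⟩ := List.append_of_mem hf
      obtain ⟨x, hs, ht⟩ := isWalk_append.1 h
      obtain rfl : x = u := by rw [← (isWalk_cons_iff.1 ht).1, hfe, he]
      exact ⟨[], e :: s, f :: t, x, rfl, by simp, by simp, .nil x, .cons he hs, ht⟩
    · obtain ⟨a, b, c, x, rfl, hb, hc, ha, hbw, hcw⟩ := ih hl
      exact ⟨e :: a, b, c, x, rfl, hb, hc, .cons he ha, hbw, hcw⟩

theorem IsWalk.exists_nodup_cons (h : IsWalk src tgt u (e :: l) u) :
    ∃ c, IsWalk src tgt u (e :: c) u ∧ ((e :: c).map src).Nodup := by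
  induction hn : l.length using Nat.strong_induction_on generalizing l with
  | _ n ih =>
    by_cases hnd : ((e :: l).map src).Nodup
    · exact ⟨l, h, hnd⟩
    obtain ⟨a, b, c, x, hsplit, hb, hc, ha, hbw, hcw⟩ := h.exists_closed_infix_of_not_nodup hnd
    -- a closed infix `b` at the front is itself a shorter closed walk starting with `e`;
    -- anywhere else it can be cut out
    rcases a with _ | ⟨e', a⟩
    · obtain rfl := isWalk_nil_iff.1 ha
      rcases b with _ | ⟨e', b⟩
      · exact absurd rfl hb
      simp only [List.nil_append, List.cons_append, List.cons.injEq] at hsplit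
      obtain ⟨rfl, rfl⟩ := hsplit
      have hlen : b.length < n := by
        have := List.length_pos_iff.2 hc
        rw [← hn, List.length_append]
        omega
      exact ih _ hlen hbw rfl
    · simp only [List.cons_append, List.cons.injEq] at hsplit
      obtain ⟨rfl, rfl⟩ := hsplit
      have hwalk : IsWalk src tgt u (e :: (a ++ c)) u :=
        isWalk_append.2 ⟨x, ha, hcw⟩
      have hlen : (a ++ c).length < n := by
        have := List.length_pos_iff.2 hb
        simp only [← hn, List.length_append]
        omega
      exact ih _ hlen hwalk rfl

theorem isSimpleCycle_of_isWalk (h : IsWalk src tgt u l u) (hl : l ≠ [])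
    (hnd : (l.map src).Nodup) : IsSimpleCycle src tgt l := by
  obtain ⟨hdi, hs, he⟩ := (isWalk_iff_isDiPath hl).1 h
  exact ⟨⟨hdi, u, hs, he⟩, hnd⟩

theorem IsSimpleCycle.exists_isRotated_isWalk (hl : IsSimpleCycle src tgt l)
    (hv : OnCycle src l v) :
    ∃ c, l.IsRotated c ∧ IsWalk src tgt v c v ∧ c ≠ [] ∧ (c.map src).Nodup := by
  obtain ⟨⟨hdi, u, hs, he⟩, hnd⟩ := hl
  have hw : IsWalk src tgt u l u := (isWalk_iff_isDiPath hdi.1).2 ⟨hdi, hs, he⟩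
  obtain ⟨e, he, rfl⟩ := List.mem_map.1 hv
  obtain ⟨s, t, rfl⟩ := List.append_of_mem he
  obtain ⟨x, hs, ht⟩ := isWalk_append.1 hw
  obtain rfl : x = src e := (isWalk_cons_iff.1 ht).1.symm
  exact ⟨e :: t ++ s, List.isRotated_append, isWalk_append.2 ⟨u, ht, hs⟩, by simp,
    (List.isRotated_append.map src).nodup_iff.1 hnd⟩

end Walks

section Cycles

variable {src tgt : E → V} {u v : V}

theorem NoIntersectingCycles.eq_of_isWalk_cons (hG : NoIntersectingCycles src tgt)
    {e e' : E} {l l' : List E} (h : IsWalk src tgt u (e :: l) u)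
    (h' : IsWalk src tgt u (e' :: l') u) : e = e' := by
  obtain ⟨c, hc, hnd⟩ := h.exists_nodup_cons
  obtain ⟨c', hc', hnd'⟩ := h'.exists_nodup_cons
  have hsrc := (isWalk_cons_iff.1 hc).1
  have hsrc' := (isWalk_cons_iff.1 hc').1
  by_cases hrot : (e :: c).IsRotated (e' :: c')
  · have he' : e' ∈ e :: c := hrot.perm.symm.subset List.mem_cons_self
    exact List.inj_on_of_nodup_map hnd List.mem_cons_self he' (hsrc.trans hsrc'.symm)
  · exact absurd ⟨by simp [OnCycle, hsrc], by simp [OnCycle, hsrc']⟩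
      (hG _ _ (isSimpleCycle_of_isWalk hc (List.cons_ne_nil _ _) hnd)
        (isSimpleCycle_of_isWalk hc' (List.cons_ne_nil _ _) hnd') hrot u)

theorem eq_of_isWalk_of_prefix {A B : List E} (hA : IsWalk src tgt v A v)
    (hB : IsWalk src tgt v B v) (hBnd : (B.map src).Nodup) (hA₀ : A ≠ []) (hAB : A <+: B) :
    A = B := by
  obtain ⟨_ | ⟨f, C⟩, rfl⟩ := hAB
  · simp
  exfalso
  obtain ⟨x, hA', hC⟩ := isWalk_append.1 hB
  obtain rfl := hA'.eq_of_isWalk hA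
  obtain ⟨e, A, rfl⟩ := List.exists_cons_of_ne_nil hA₀
  rw [List.map_append, List.nodup_append] at hBnd
  exact hBnd.2.2 _ (List.mem_map_of_mem List.mem_cons_self) _
    (List.mem_map_of_mem List.mem_cons_self)
    ((isWalk_cons_iff.1 hA).1.trans (isWalk_cons_iff.1 hC).1.symm)

theorem append_ne_append_of_isWalk {A B : List E} (hA : IsWalk src tgt v A v)
    (hB : IsWalk src tgt v B v) (hAnd : (A.map src).Nodup) (hBnd : (B.map src).Nodup)
    (hA₀ : A ≠ []) (hB₀ : B ≠ []) (hAB : A ≠ B) : A ++ B ≠ B ++ A := by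
  intro h
  rcases List.prefix_or_prefix_of_prefix (List.prefix_append A B) (h ▸ List.prefix_append B A)
    with hpre | hpre
  · exact hAB (eq_of_isWalk_of_prefix hA hB hBnd hA₀ hpre)
  · exact hAB (eq_of_isWalk_of_prefix hB hA hAnd hB₀ hpre).symm

end Cycles

section BlockPaths

variable {src tgt : E → V} {v : V}

/-- The concatenation `B 0 ++ B 1 ++ ⋯` of blocks of common length `n`; the default edge `e₀`
is never read when every block has length `n`. -/
def blockPath (n : ℕ) (e₀ : E) (B : ℕ → List E) (k : ℕ) : E :=
  (B (k / n)).getD (k % n) e₀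

theorem blockPath_mul_add {n : ℕ} {e₀ : E} {B : ℕ → List E} (hB : ∀ a, (B a).length = n)
    (a : ℕ) {j : ℕ} (hj : j < n) :
    blockPath n e₀ B (n * a + j) = (B a)[j]'(by rw [hB]; exact hj) := by
  rw [blockPath, Nat.mul_add_div (by omega), Nat.div_eq_of_lt hj, add_zero, Nat.mul_add_mod,
    Nat.mod_eq_of_lt hj, List.getD_eq_getElem]

theorem isInfPath_blockPath {n : ℕ} (hn : 0 < n) (e₀ : E) {B : ℕ → List E}
    (hB : ∀ a, (B a).length = n) (hwalk : ∀ a, IsWalk src tgt v (B a) v) :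
    IsInfPath src tgt (blockPath n e₀ B) := by
  intro k
  obtain ⟨a, j, hj, rfl⟩ : ∃ a j, j < n ∧ k = n * a + j :=
    ⟨k / n, k % n, Nat.mod_lt k hn, (Nat.div_add_mod k n).symm⟩
  rw [blockPath_mul_add hB a hj]
  rcases Nat.lt_or_ge (j + 1) n with hj' | hj'
  · rw [add_assoc, blockPath_mul_add hB a hj']
    exact (hwalk a).tgt_getElem (by rw [hB]; exact hj')
  · rw [show n * a + j + 1 = n * (a + 1) + 0 by rw [Nat.mul_succ]; omega,
      blockPath_mul_add hB (a + 1) hn, (hwalk (a + 1)).src_getElem_zero]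
    exact (hwalk a).tgt_getElem_of_succ_eq (by rw [hB]; omega)

theorem eq_of_blockPath_eq {n : ℕ} {e₀ : E} {B B' : ℕ → List E}
    (hB : ∀ a, (B a).length = n) (hB' : ∀ a, (B' a).length = n)
    (h : blockPath n e₀ B = blockPath n e₀ B') : B = B' := by
  funext a
  refine List.ext_getElem (by rw [hB, hB']) fun j hj _ => ?_
  have hjn : j < n := hB a ▸ hj
  simpa only [blockPath_mul_add hB a hjn, blockPath_mul_add hB' a hjn] using
    congrFun h (n * a + j)

theorem not_countable_infPaths_of_isWalk {X Y : List E} (hX : IsWalk src tgt v X v)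
    (hY : IsWalk src tgt v Y v) (hX₀ : X ≠ []) (hlen : X.length = Y.length) (hXY : X ≠ Y) :
    ¬ {p : ℕ → E | IsInfPath src tgt p}.Countable := by
  classical
  intro hcount
  let B : Set ℕ → ℕ → List E := fun s a => if a ∈ s then X else Y
  have hB : ∀ s a, (B s a).length = X.length := fun s a => by
    by_cases ha : a ∈ s <;> simp [B, ha, hlen]
  have hwalk : ∀ s a, IsWalk src tgt v (B s a) v := fun s a => by
    by_cases ha : a ∈ s <;> simp [B, ha, hX, hY]
  let path : Set ℕ → {p : ℕ → E | IsInfPath src tgt p} := fun s =>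
    ⟨blockPath X.length (X.head hX₀) (B s),
      isInfPath_blockPath (List.length_pos_iff.2 hX₀) _ (hB s) (hwalk s)⟩
  have hpath : Function.Injective path := by
    intro s s' h
    have hBs := congrFun (eq_of_blockPath_eq (hB s) (hB s') (congrArg Subtype.val h))
    ext a
    specialize hBs a
    by_cases ha : a ∈ s <;> by_cases ha' : a ∈ s' <;> simp_all [B]
  have := hcount.to_subtype
  obtain ⟨f, hf⟩ := exists_injective_nat {p : ℕ → E | IsInfPath src tgt p}
  exact Function.cantor_injective _ (hf.comp hpath)

end BlockPaths

theorem eventually_exists_gt_eq {α : Type*} [Finite α] (p : ℕ → α) :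
    ∀ᶠ n in atTop, ∃ m > n, p m = p n := by
  have hfiber : ∀ a, ∀ᶠ n in atTop, p n = a → ∃ m > n, p m = p n := by
    intro a
    rcases (p ⁻¹' {a}).finite_or_infinite with hfin | hinf
    · rw [← Nat.cofinite_eq_atTop]
      exact hfin.eventually_cofinite_notMem.mono fun n hn hna => absurd hna hn
    · refine Eventually.of_forall fun n hna => ?_
      obtain ⟨m, hm, hnm⟩ := hinf.exists_gt n
      exact ⟨m, hnm, hm.trans hna.symm⟩
  filter_upwards [eventually_all.2 hfiber] with n hn using hn _ rfl

theorem countable_setOf_eventually_iterate {α : Type*} [Finite α] :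
    {p : ℕ → α | ∃ N, ∃ g : α → α, ∀ n ≥ N, p (n + 1) = g (p n)}.Countable := by
  have horbit : ∀ N (g : α → α),
      {p : ℕ → α | ∀ n ≥ N, p (n + 1) = g (p n)}.Countable := by
    intro N g
    refine (Set.mapsTo_univ (fun p (i : Fin (N + 1)) => p i) _).countable_of_injOn ?_
      Set.countable_univ
    intro p hp q hq hpq
    funext n
    induction n with
    | zero => exact congrFun hpq 0
    | succ n ih =>
      by_cases hn : n + 1 ≤ N
      · exact congrFun hpq ⟨n + 1, by omega⟩
      · rw [hp n (by omega), hq n (by omega), ih]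
  refine (Set.countable_iUnion fun N => Set.countable_iUnion fun g => horbit N g).mono ?_
  rintro p ⟨N, g, hp⟩
  exact Set.mem_iUnion₂.2 ⟨N, g, hp⟩

section InfPaths

variable {src tgt : E → V} {p : ℕ → E}

theorem IsInfPath.isWalk_map_range' (hp : IsInfPath src tgt p) (n k : ℕ) :
    IsWalk src tgt (src (p n)) ((List.range' n k).map p) (src (p (n + k))) := by
  induction k generalizing n with
  | zero => simp
  | succ k ih =>
    rw [List.range'_succ, List.map_cons, isWalk_cons_iff, hp n, ← Nat.add_assoc,
      Nat.add_right_comm]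
    exact ⟨rfl, ih (n + 1)⟩

theorem IsInfPath.exists_eventually_iterate [Finite E] (hG : NoIntersectingCycles src tgt)
    (hp : IsInfPath src tgt p) : ∃ N, ∃ g : E → E, ∀ n ≥ N, p (n + 1) = g (p n) := by
  obtain ⟨N, hN⟩ := eventually_atTop.1 (eventually_exists_gt_eq p)
  have hclosed : ∀ n ≥ N, ∃ l, IsWalk src tgt (src (p n)) (p n :: l) (src (p n)) := by
    intro n hn
    obtain ⟨m, hnm, hm⟩ := hN n hn
    have hwalk := hp.isWalk_map_range' n (m - n - 1 + 1)
    rw [List.range'_succ, List.map_cons, show n + (m - n - 1 + 1) = m by omega, hm] at hwalk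
    exact ⟨_, hwalk⟩
  have hdet : Function.FactorsThrough (fun n : {n // N ≤ n} => p n)
      (fun n : {n // N ≤ n} => src (p n)) := by
    rintro ⟨m, hm⟩ ⟨n, hn⟩ (hmn : src (p m) = src (p n))
    obtain ⟨l, hl⟩ := hclosed m hm
    obtain ⟨l', hl'⟩ := hclosed n hn
    exact hG.eq_of_isWalk_cons hl (hmn ▸ hl')
  refine ⟨N, Function.extend (fun n : {n // N ≤ n} => src (p n)) (fun n => p n)
    (fun _ => p 0) ∘ tgt, fun n hn => ?_⟩
  rw [Function.comp_apply, hp n, hdet.extend_apply _ ⟨n + 1, by omega⟩]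

end InfPaths

theorem countable_infPaths_of_noIntersectingCycles [Finite E] {src tgt : E → V}
    (hG : NoIntersectingCycles src tgt) : {p : ℕ → E | IsInfPath src tgt p}.Countable :=
  countable_setOf_eventually_iterate.mono fun _ hp => hp.exists_eventually_iterate hG

theorem not_countable_infPaths_of_not_noIntersectingCycles {src tgt : E → V}
    (hG : ¬ NoIntersectingCycles src tgt) :
    ¬ {p : ℕ → E | IsInfPath src tgt p}.Countable := by
  simp only [NoIntersectingCycles, not_forall, not_not] at hG
  obtain ⟨l, l', hl, hl', hrot, v, hv, hv'⟩ := hG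
  obtain ⟨A, hlA, hA, hA₀, hAnd⟩ := hl.exists_isRotated_isWalk hv
  obtain ⟨B, hlB, hB, hB₀, hBnd⟩ := hl'.exists_isRotated_isWalk hv'
  have hAB : A ≠ B := fun h => hrot (hlA.trans (h ▸ hlB.symm))
  exact not_countable_infPaths_of_isWalk (isWalk_append.2 ⟨v, hA, hB⟩)
    (isWalk_append.2 ⟨v, hB, hA⟩) (by simp [hA₀]) (by simp [add_comm])
    (append_ne_append_of_isWalk hA hB hAnd hBnd hA₀ hB₀ hAB)

theorem countable_infPaths_iff_noIntersectingCycles_general [Fintype E]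
    (src tgt : E → V) :
    {p : ℕ → E | IsInfPath src tgt p}.Countable ↔ NoIntersectingCycles src tgt :=
  ⟨not_imp_not.1 not_countable_infPaths_of_not_noIntersectingCycles,
    countable_infPaths_of_noIntersectingCycles⟩

/-- The set of infinite paths in a finite directed multigraph is
countable if and only if the graph has no intersecting cycles. -/
theorem countable_infPaths_iff_noIntersectingCycles [Fintype V] [Fintype E]
    (src tgt : E → V) :
    {p : ℕ → E | IsInfPath src tgt p}.Countable ↔ NoIntersectingCycles src tgt :=
  countable_infPaths_iff_noIntersectingCycles_general src tgt
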